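/- arXiv:1312.1073 — 3 statements merged into one kernel-verified Lean document; each statement's English description precedes it below -/
import Mathlib

section
/- Let V ⊂ E_v and W ⊂ E_w be nonempty convex compact sets, f : V × W → ℝ a Lipschitz continuous function convex in v and concave in w, and let H([v;w]) = [H_v(v,w); H_w(v,w)] with H_v(v,w) ∈ ∂_v f(v,w) and H_w(v,w) ∈ ∂_w[−f(v,w)]. If C = {(y_t = [v_t;w_t], λ_t, H(y_t))}_{t=1}^N is an accuracy certificate (λ_t ≥ 0, ∑λ_t = 1) and ([v̂;ŵ]) = ∑_t λ_t [v_t;w_t], then the saddle point inaccuracy satisfies sup_{w∈W} f(v̂, w) − inf_{v∈V} f(v, ŵ) ≤ sup_{[v;w]∈V×W} ∑_{t=1}^N λ_t ⟨H(y_t), y_t − [v;w]⟩. -/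
open scoped RealInnerProductSpace

/-- Lemma 1 (Special case): a certificate bounds the saddle point inaccuracy of the
weighted average point. -/
theorem certificate_bounds_saddle_inaccuracy
    {Ev Ew : Type*} [NormedAddCommGroup Ev] [InnerProductSpace ℝ Ev] [FiniteDimensional ℝ Ev]
    [NormedAddCommGroup Ew] [InnerProductSpace ℝ Ew] [FiniteDimensional ℝ Ew]
    (V : Set Ev) (W : Set Ew) (hV : V.Nonempty) (hW : W.Nonempty)
    (hVconv : Convex ℝ V) (hWconv : Convex ℝ W) (hVcomp : IsCompact V) (hWcomp : IsCompact W)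
    (f : Ev → Ew → ℝ) (K : NNReal)
    (hLip : LipschitzOnWith K (fun p : Ev × Ew => f p.1 p.2) (V ×ˢ W))
    (hconv : ∀ w ∈ W, ConvexOn ℝ V (fun v => f v w))
    (hconc : ∀ v ∈ V, ConcaveOn ℝ W (fun w => f v w))
    (Hv : Ev → Ew → Ev) (Hw : Ev → Ew → Ew)
    -- Hv(v,w) is a subgradient of f(·,w) at v, on V
    (hHv : ∀ v ∈ V, ∀ w ∈ W, ∀ v' ∈ V, f v w + ⟪Hv v w, v' - v⟫ ≤ f v' w)
    -- Hw(v,w) is a subgradient of −f(v,·) at w, on W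
    (hHw : ∀ v ∈ V, ∀ w ∈ W, ∀ w' ∈ W, -f v w + ⟪Hw v w, w' - w⟫ ≤ -f v w')
    (N : ℕ) (v : Fin N → Ev) (w : Fin N → Ew) (lam : Fin N → ℝ)
    (hvY : ∀ t, v t ∈ V) (hwY : ∀ t, w t ∈ W)
    (hlam : ∀ t, 0 ≤ lam t) (hsum : ∑ t, lam t = 1)
    (vhat : Ev) (what : Ew)
    (hvhat : vhat = ∑ t, lam t • v t) (hwhat : what = ∑ t, lam t • w t) :
    (⨆ w' : W, f vhat w') - (⨅ v' : V, f v' what) ≤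
      ⨆ p : (V ×ˢ W : Set (Ev × Ew)),
        ∑ t, lam t * (⟪Hv (v t) (w t), v t - (p : Ev × Ew).1⟫
                       + ⟪Hw (v t) (w t), w t - (p : Ev × Ew).2⟫) := by
  classical
  set g : Ev × Ew → ℝ := fun p =>
    ∑ t, lam t * (⟪Hv (v t) (w t), v t - p.1⟫ + ⟪Hw (v t) (w t), w t - p.2⟫) with hg
  have hVW : (V ×ˢ W : Set (Ev × Ew)).Nonempty := hV.prod hW
  haveI : Nonempty (V ×ˢ W : Set (Ev × Ew)) := hVW.to_subtype
  haveI : Nonempty V := hV.to_subtype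
  haveI : Nonempty W := hW.to_subtype
  have hgcont : Continuous g := by
    apply continuous_finset_sum
    intro t _
    exact continuous_const.mul
      (((continuous_const.inner (continuous_const.sub continuous_fst))).add
        ((continuous_const.inner (continuous_const.sub continuous_snd))))
  have hbdd : BddAbove (Set.range fun p : (V ×ˢ W : Set (Ev × Ew)) => g p) := by
    rw [← Set.image_eq_range]
    exact ((hVcomp.prod hWcomp).image hgcont).bddAbove
  have hvhatV : vhat ∈ V := by
    rw [hvhat]
    exact hVconv.sum_mem (fun t _ => hlam t) hsum (fun t _ => hvY t)
  have hwhatW : what ∈ W := by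
    rw [hwhat]
    exact hWconv.sum_mem (fun t _ => hlam t) hsum (fun t _ => hwY t)
  -- key pointwise bound
  have key : ∀ v' ∈ V, ∀ w' ∈ W, f vhat w' - f v' what ≤ g (v', w') := by
    intro v' hv' w' hw'
    have h1 : f vhat w' ≤ ∑ t, lam t * f (v t) w' := by
      rw [hvhat]
      simpa [smul_eq_mul] using
        (hconv w' hw').map_sum_le (fun t _ => hlam t) hsum (fun t _ => hvY t)
    have h2 : ∑ t, lam t * f v' (w t) ≤ f v' what := by
      rw [hwhat]
      simpa [smul_eq_mul] using
        (hconc v' hv').le_map_sum (fun t _ => hlam t) hsum (fun t _ => hwY t)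
    have h3 : ∑ t, lam t * f (v t) w' - ∑ t, lam t * f v' (w t) ≤ g (v', w') := by
      rw [hg, ← Finset.sum_sub_distrib]
      apply Finset.sum_le_sum
      intro t _
      have hA := hHv (v t) (hvY t) (w t) (hwY t) v' hv'
      have hB := hHw (v t) (hvY t) (w t) (hwY t) w' hw'
      have hA' : f (v t) (w t) - f v' (w t) ≤ ⟪Hv (v t) (w t), v t - v'⟫ := by
        have : ⟪Hv (v t) (w t), v' - v t⟫ = -⟪Hv (v t) (w t), v t - v'⟫ := by
          rw [← inner_neg_right, neg_sub]
        linarith [hA, this.le, this.ge]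
      have hB' : f (v t) w' - f (v t) (w t) ≤ ⟪Hw (v t) (w t), w t - w'⟫ := by
        have : ⟪Hw (v t) (w t), w' - w t⟫ = -⟪Hw (v t) (w t), w t - w'⟫ := by
          rw [← inner_neg_right, neg_sub]
        linarith [hB, this.le, this.ge]
      have := add_le_add hA' hB'
      calc lam t * f (v t) w' - lam t * f v' (w t)
          = lam t * (f (v t) w' - f v' (w t)) := by ring
        _ ≤ lam t * (⟪Hv (v t) (w t), v t - v'⟫ + ⟪Hw (v t) (w t), w t - w'⟫) := by
            apply mul_le_mul_of_nonneg_left _ (hlam t)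
            linarith
    linarith [h1, h2, h3]
  set S : ℝ := ⨆ p : (V ×ˢ W : Set (Ev × Ew)), g p with hS
  have hgS : ∀ v' ∈ V, ∀ w' ∈ W, g (v', w') ≤ S := by
    intro v' hv' w' hw'
    exact le_ciSup hbdd (⟨(v', w'), Set.mk_mem_prod hv' hw'⟩ : (V ×ˢ W : Set (Ev × Ew)))
  have hsup : (⨆ w' : W, f vhat w') ≤ (⨅ v' : V, f v' what) + S := by
    apply ciSup_le
    intro w'
    have : f vhat w' - S ≤ ⨅ v' : V, f v' what := by
      apply le_ciInf
      intro v'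
      have := key v' v'.2 w' w'.2
      have := hgS v' v'.2 w' w'.2
      linarith
    linarith
  have hinf : BddBelow (Set.range fun v' : V => f v' what) := by
    have hc : ContinuousOn (fun x : Ev => f x what) V :=
      hLip.continuousOn.comp (Continuous.continuousOn (by continuity))
        (fun x hx => Set.mk_mem_prod hx hwhatW)
    have h := (hVcomp.image_of_continuousOn hc).bddBelow
    rwa [Set.image_eq_range] at h
  linarith [hsup]
end

section
/- Let E, F be Euclidean spaces, A : F → E linear, a ∈ E, Y ⊆ F nonempty closed convex, and G : Y → F a continuous monotone operator such that for every x ∈ E the variational inequality given by y ↦ G(y) − A*x on Y has a strong solution y(x) ∈ Y, i.e., ⟨A*x − G(y(x)), y(x) − y⟩ ≥ 0 for all y ∈ Y. Then the operator Φ(x) = A y(x) + a is monotone on E: ⟨Φ(x') − Φ(x''), x' − x''⟩ ≥ 0 for all x', x''. -/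
open scoped RealInnerProductSpace

/-- The primal operator `Φ(x) = A y(x) + a` induced by a Fenchel-type representation
is monotone on `E`. -/
theorem primal_operator_monotone
    {E F : Type*} [NormedAddCommGroup E] [InnerProductSpace ℝ E] [FiniteDimensional ℝ E]
    [NormedAddCommGroup F] [InnerProductSpace ℝ F] [FiniteDimensional ℝ F]
    (A : F →ₗ[ℝ] E) (a : E)
    (Y : Set F) (hY : Y.Nonempty) (hYclosed : IsClosed Y) (hYconv : Convex ℝ Y)
    (G : F → F) (hGcont : ContinuousOn G Y)
    (hGmono : ∀ y ∈ Y, ∀ y' ∈ Y, 0 ≤ ⟪G y - G y', y - y'⟫)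
    (yx : E → F)
    (hyx : ∀ x : E, yx x ∈ Y ∧ ∀ y ∈ Y, 0 ≤ ⟪LinearMap.adjoint A x - G (yx x), yx x - y⟫)
    (Φ : E → E) (hΦ : ∀ x, Φ x = A (yx x) + a) :
    ∀ x' x'' : E, 0 ≤ ⟪Φ x' - Φ x'', x' - x''⟫ := by
  intro x' x''
  obtain ⟨hy'Y, hVI'⟩ := hyx x'
  obtain ⟨hy''Y, hVI''⟩ := hyx x''
  have h1 := hVI' (yx x'') hy''Y
  have h2 := hVI'' (yx x') hy'Y
  have hG := hGmono (yx x') hy'Y (yx x'') hy''Y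
  have hadj : ⟪Φ x' - Φ x'', x' - x''⟫
      = ⟪LinearMap.adjoint A x' - LinearMap.adjoint A x'', yx x' - yx x''⟫ := by
    rw [hΦ, hΦ]
    have : A (yx x') + a - (A (yx x'') + a) = A (yx x' - yx x'') := by
      rw [map_sub]; abel
    rw [this, real_inner_comm, ← LinearMap.adjoint_inner_left,
      map_sub, inner_sub_right]
  rw [hadj]
  have key : ⟪LinearMap.adjoint A x' - G (yx x'), yx x' - yx x''⟫
      + ⟪LinearMap.adjoint A x'' - G (yx x''), yx x'' - yx x'⟫
      + ⟪G (yx x') - G (yx x''), yx x' - yx x''⟫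
      = ⟪LinearMap.adjoint A x' - LinearMap.adjoint A x'', yx x' - yx x''⟫ := by
    simp only [inner_sub_left, inner_sub_right]
    ring
  linarith
end

section
/- Let (F, A, a, y(·), G(·), Y) represent a monotone operator Φ : E → E, and let h ↦ Qh + q be an affine map from Euclidean space H to E. Define Â = Q*A, â = Q*a, Ĝ(y) = G(y) − A*q, ŷ(h) = y(Qh + q). Then (F, Â, â, ŷ(·), Ĝ(·), Y) represents the monotone operator Φ̂(h) = Q*Φ(Qh + q): that is, ŷ(h) ∈ Y, ⟨Â*h − Ĝ(ŷ(h)), ŷ(h) − y⟩ ≥ 0 for all y ∈ Y, and Φ̂(h) = Â ŷ(h) + â. -/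
open scoped RealInnerProductSpace

/-- Calculus of Fenchel-type representations: affine substitution of argument.
If `(F, A, a, y(·), G(·), Y)` represents `Φ` and `h ↦ Qh + q` is affine, then
`(F, Q*A, Q*a, y(Q·+q), G(·) − A*q, Y)` represents `Φ̂(h) = Q*Φ(Qh + q)`. -/
theorem representation_affine_substitution
    {E F H : Type*} [NormedAddCommGroup E] [InnerProductSpace ℝ E] [FiniteDimensional ℝ E]
    [NormedAddCommGroup F] [InnerProductSpace ℝ F] [FiniteDimensional ℝ F]
    [NormedAddCommGroup H] [InnerProductSpace ℝ H] [FiniteDimensional ℝ H]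
    (A : F →ₗ[ℝ] E) (a : E)
    (Y : Set F)
    (G : F → F) (hGmono : ∀ y ∈ Y, ∀ y' ∈ Y, 0 ≤ ⟪G y - G y', y - y'⟫)
    (yx : E → F)
    (hyx : ∀ x : E, yx x ∈ Y ∧ ∀ y ∈ Y, 0 ≤ ⟪LinearMap.adjoint A x - G (yx x), yx x - y⟫)
    (Φ : E → E) (hΦ : ∀ x, Φ x = A (yx x) + a)
    (Q : H →ₗ[ℝ] E) (q : E)
    (Ahat : F →ₗ[ℝ] H) (hAhat : Ahat = (LinearMap.adjoint Q).comp A)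
    (ahat : H) (hahat : ahat = LinearMap.adjoint Q a)
    (Ghat : F → F) (hGhat : ∀ y, Ghat y = G y - LinearMap.adjoint A q)
    (yhat : H → F) (hyhat : ∀ h, yhat h = yx (Q h + q))
    (Φhat : H → H) (hΦhat : ∀ h, Φhat h = LinearMap.adjoint Q (Φ (Q h + q))) :
    ∀ h : H, yhat h ∈ Y ∧
      (∀ y ∈ Y, 0 ≤ ⟪LinearMap.adjoint Ahat h - Ghat (yhat h), yhat h - y⟫) ∧
      Φhat h = Ahat (yhat h) + ahat := by
  intro h
  obtain ⟨hmem, hineq⟩ := hyx (Q h + q)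
  refine ⟨by rw [hyhat]; exact hmem, ?_, ?_⟩
  · intro y hy
    have key : LinearMap.adjoint Ahat h - Ghat (yhat h)
        = LinearMap.adjoint A (Q h + q) - G (yx (Q h + q)) := by
      rw [hAhat, hGhat, hyhat, LinearMap.adjoint_comp, LinearMap.adjoint_adjoint]
      simp [map_add]
      abel
    rw [key, hyhat]
    exact hineq y hy
  · rw [hΦhat, hΦ, hyhat, hAhat, hahat, map_add]
    simp [LinearMap.comp_apply]
end
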